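/- Let q ∈ ℂ^× with q ≠ ±1, let a ∈ (ℂ^×)ⁿ be a calibrated weight, and let sᵢ = (i, i+1) be a transposition such that a_{i+1} ∉ {q·aᵢ, q⁻¹·aᵢ} (an admissible transposition for a). Then sᵢa, the sequence obtained from a by swapping aᵢ and a_{i+1}, is again a calibrated weight. -/
import Mathlib


/-- A weight `a ∈ (ℂ^×)ⁿ` is calibrated (for `q`) if whenever `aᵢ = aⱼ` with `i < j`,
both `q·aᵢ` and `q⁻¹·aᵢ` occur among `a_{i+1}, …, a_{j-1}`. -/
def Calibrated (q : ℂ) {n : ℕ} (a : Fin n → ℂ) : Prop :=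
  ∀ i j : Fin n, i < j → a i = a j →
    (∃ k : Fin n, i < k ∧ k < j ∧ a k = q * a i) ∧
    (∃ k : Fin n, i < k ∧ k < j ∧ a k = q⁻¹ * a i)

lemma swap_aux {n : ℕ} (c : ℂ) (hc0 : c ≠ 0)
    (a : Fin n → ℂ)
    (i j : Fin n) (hij : (i : ℕ) + 1 = (j : ℕ))
    (hA : a j ≠ c * a i) (hB : a j ≠ c⁻¹ * a i)
    (H : ∀ p r : Fin n, p < r → a p = a r → ∃ k : Fin n, p < k ∧ k < r ∧ a k = c * a p)
    (p r : Fin n) (hpr : p < r)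
    (heq : (a ∘ Equiv.swap i j) p = (a ∘ Equiv.swap i j) r) :
    ∃ k : Fin n, p < k ∧ k < r ∧ (a ∘ Equiv.swap i j) k = c * ((a ∘ Equiv.swap i j) p) := by
  have hij' : i < j := Fin.lt_def.mpr (by omega)
  simp only [Function.comp_apply] at heq ⊢
  by_cases hpi : p = i
  · replace hpi := hpi.symm; subst hpi
    rw [Equiv.swap_apply_left] at heq ⊢
    by_cases hrj : r = j
    · replace hrj := hrj.symm; subst hrj
      rw [Equiv.swap_apply_right] at heq
      obtain ⟨k, hk1, hk2, _⟩ := H i j hij' heq.symm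
      have h1 := Fin.lt_def.mp hk1
      have h2 := Fin.lt_def.mp hk2
      omega
    · have hri : r ≠ i := ne_of_gt hpr
      have hrj' : j < r := Fin.lt_def.mpr (by
        have h1 := Fin.lt_def.mp hpr
        have h2 : (r : ℕ) ≠ (j : ℕ) := fun h => hrj (Fin.ext h)
        omega)
      rw [Equiv.swap_apply_of_ne_of_ne hri hrj] at heq
      obtain ⟨k, hk1, hk2, hk3⟩ := H j r hrj' heq
      have hki : k ≠ i := ne_of_gt (hij'.trans hk1)
      have hkj : k ≠ j := ne_of_gt hk1
      exact ⟨k, hij'.trans hk1, hk2, by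
        rw [Equiv.swap_apply_of_ne_of_ne hki hkj]; exact hk3⟩
  · by_cases hpj : p = j
    · replace hpj := hpj.symm; subst hpj
      rw [Equiv.swap_apply_right] at heq ⊢
      have hri : i < r := hij'.trans hpr
      have hrj : r ≠ j := ne_of_gt hpr
      have hri' : r ≠ i := ne_of_gt hri
      rw [Equiv.swap_apply_of_ne_of_ne hri' hrj] at heq
      obtain ⟨k, hk1, hk2, hk3⟩ := H i r hri heq
      have hkj : k ≠ j := by
        intro h
        exact hA (by rw [← h]; exact hk3)
      have hki : k ≠ i := ne_of_gt hk1
      have hpk : j < k := Fin.lt_def.mpr (by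
        have h1 := Fin.lt_def.mp hk1
        have h2 : (k : ℕ) ≠ (j : ℕ) := fun h => hkj (Fin.ext h)
        omega)
      exact ⟨k, hpk, hk2, by
        rw [Equiv.swap_apply_of_ne_of_ne hki hkj]; exact hk3⟩
    · rw [Equiv.swap_apply_of_ne_of_ne hpi hpj] at heq ⊢
      by_cases hri : r = i
      · replace hri := hri.symm; subst hri
        rw [Equiv.swap_apply_left] at heq
        have hprj : p < j := hpr.trans hij'
        obtain ⟨k, hk1, hk2, hk3⟩ := H p j hprj heq
        have hki : k ≠ i := by
          intro h
          subst h
          rw [heq] at hk3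
          exact hB (by rw [hk3, inv_mul_cancel_left₀ hc0])
        have hkr : k < i := Fin.lt_def.mpr (by
          have h1 := Fin.lt_def.mp hk2
          have h2 : (k : ℕ) ≠ (i : ℕ) := fun h => hki (Fin.ext h)
          omega)
        have hkj : k ≠ j := ne_of_lt hk2
        exact ⟨k, hk1, hkr, by
          rw [Equiv.swap_apply_of_ne_of_ne hki hkj]; exact hk3⟩
      · by_cases hrj : r = j
        · replace hrj := hrj.symm; subst hrj
          rw [Equiv.swap_apply_right] at heq
          have hpi' : p < i := Fin.lt_def.mpr (by
            have h1 := Fin.lt_def.mp hpr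
            have h2 : (p : ℕ) ≠ (i : ℕ) := fun h => hpi (Fin.ext h)
            omega)
          obtain ⟨k, hk1, hk2, hk3⟩ := H p i hpi' heq
          have hki : k ≠ i := ne_of_lt hk2
          have hkj : k ≠ j := ne_of_lt (hk2.trans hij')
          exact ⟨k, hk1, hk2.trans hij', by
            rw [Equiv.swap_apply_of_ne_of_ne hki hkj]; exact hk3⟩
        · rw [Equiv.swap_apply_of_ne_of_ne hri hrj] at heq
          obtain ⟨k, hk1, hk2, hk3⟩ := H p r hpr heq
          by_cases hki : k = i
          · replace hki := hki.symm; subst hki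
            have hjr : j < r := Fin.lt_def.mpr (by
              have h1 := Fin.lt_def.mp hk2
              have h2 : (r : ℕ) ≠ (j : ℕ) := fun h => hrj (Fin.ext h)
              omega)
            exact ⟨j, hk1.trans hij', hjr, by
              rw [Equiv.swap_apply_right]; exact hk3⟩
          · by_cases hkj : k = j
            · replace hkj := hkj.symm; subst hkj
              have hpi' : p < i := Fin.lt_def.mpr (by
                have h1 := Fin.lt_def.mp hk1
                have h2 : (p : ℕ) ≠ (i : ℕ) := fun h => hpi (Fin.ext h)
                omega)
              exact ⟨i, hpi', hij'.trans hk2, by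
                rw [Equiv.swap_apply_left]; exact hk3⟩
            · exact ⟨k, hk1, hk2, by
                rw [Equiv.swap_apply_of_ne_of_ne hki hkj]; exact hk3⟩

/-- If `sᵢ = (i, i+1)` is an admissible transposition for a calibrated weight `a`
(i.e. `a_{i+1} ∉ {q·aᵢ, q⁻¹·aᵢ}`), then the swapped weight `sᵢa` is again calibrated. -/
theorem calibrated_weight_admissible_swap (q : ℂ)
    (hq0 : q ≠ 0) (hq1 : q ≠ 1) (hqm1 : q ≠ -1)
    {n : ℕ} (a : Fin n → ℂ) (ha0 : ∀ i, a i ≠ 0) (hcal : Calibrated q a)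
    (i j : Fin n) (hij : (i : ℕ) + 1 = (j : ℕ))
    (hadm1 : a j ≠ q * a i) (hadm2 : a j ≠ q⁻¹ * a i) :
    Calibrated q (a ∘ Equiv.swap i j) := by
  intro p r hpr heq
  refine ⟨?_, ?_⟩
  · exact swap_aux q hq0 a i j hij hadm1 hadm2
      (fun p r h he => (hcal p r h he).1) p r hpr heq
  · have h1' : a j ≠ (q⁻¹)⁻¹ * a i := by rw [inv_inv]; exact hadm1
    exact swap_aux q⁻¹ (inv_ne_zero hq0) a i j hij hadm2 h1'
      (fun p r h he => (hcal p r h he).2) p r hpr heq
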